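/- Let T be a string of length at least ℓ, let k ≥ 1 be an integer, and let Q be a primitive string with hd(T[1..ℓ], Q^∞[1..ℓ]) ≤ 2k. Set ℓ' = ⌊ℓ/2⌋ and assume ⌊ℓ'/|Q|⌋ ≥ 62k. Then for every integer i ≥ 1 that is not a multiple of |Q| and satisfies i + ℓ' ≤ ℓ, we have hd(T[1..ℓ'], T[i+1..i+ℓ']) ≥ 54k. -/
import Mathlib


variable {α : Type*}

/-- Hamming distance: the number of positions at which two (equal-length) strings differ. -/
def hamDist [DecidableEq α] (S T : List α) : ℕ :=
  ((S.zip T).filter fun c => decide (c.1 ≠ c.2)).length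

/-- 1-based substring `T[i..j]` (inclusive). -/
def substr (T : List α) (i j : ℕ) : List α := (T.drop (i - 1)).take (j - i + 1)

/-- `Q^m`: the concatenation of `m` copies of `Q`. -/
def listPow (Q : List α) (m : ℕ) : List α := (List.replicate m Q).flatten

/-- `Q^∞[a..b]`: the segment from position `a` through `b` (1-based) of the infinite
periodic string `Q^∞` with `Q^∞[i] = Q[((i−1) mod |Q|) + 1]`. -/
def infSeg (Q : List α) (a b : ℕ) : List α := substr (listPow Q b) a b

/-- A nonempty string is primitive if it is not a power of a strictly shorter string,
i.e. it equals `R^m` only for `m = 1`. -/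
def PrimitiveStr (Q : List α) : Prop :=
  Q ≠ [] ∧ ∀ (R : List α) (m : ℕ), Q = listPow R m → m = 1

/-- The forward cyclic rotation `rot(S) = S[m]·S[1..m−1]`. -/
def rot (S : List α) : List α := S.rotate (S.length - 1)

/-- `p` is a `k`-mismatch period of `T`: `1 ≤ p ≤ |T|` and
`hd(T[1..n−p+1], T[p..n]) ≤ k`. -/
def IsMismatchPeriod [DecidableEq α] (k p : ℕ) (T : List α) : Prop :=
  1 ≤ p ∧ p ≤ T.length ∧
    hamDist (substr T 1 (T.length - p + 1)) (substr T p T.length) ≤ k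

lemma hamDist_cons [DecidableEq α] (a b : α) (S T : List α) :
    hamDist (a::S) (b::T) = (if a = b then 0 else 1) + hamDist S T := by
  by_cases h : a = b <;> simp [hamDist, List.filter_cons, h, Nat.add_comm]

lemma hamDist_eq_sum [DecidableEq α] (S T : List α) :
    hamDist S T = ∑ j ∈ Finset.range (min S.length T.length),
      (if S[j]? = T[j]? then 0 else 1) := by
  induction S generalizing T with
  | nil => simp [hamDist]
  | cons a S ih =>
    cases T with
    | nil => simp [hamDist]
    | cons b T =>
      rw [hamDist_cons, ih]
      have : min (a::S).length (b::T).length = min S.length T.length + 1 := by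
        simp [Nat.succ_min_succ]
      rw [this, Finset.sum_range_succ']
      simp [add_comm]

lemma listPow_succ (Q : List α) (m : ℕ) : listPow Q (m+1) = Q ++ listPow Q m := by
  simp [listPow, List.replicate_succ]

lemma length_listPow (Q : List α) (m : ℕ) : (listPow Q m).length = m * Q.length := by
  induction m with
  | zero => simp [listPow]
  | succ m ih => rw [listPow_succ]; simp [ih]; ring

lemma getElem?_listPow (Q : List α) (m j : ℕ) (hj : j < m * Q.length) :
    (listPow Q m)[j]? = Q[j % Q.length]? := by
  induction m generalizing j with
  | zero => omega
  | succ m ih =>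
    rw [listPow_succ, List.getElem?_append]
    by_cases h : j < Q.length
    · rw [if_pos h, Nat.mod_eq_of_lt h]
    · push_neg at h
      have hs : (m+1) * Q.length = m * Q.length + Q.length := Nat.succ_mul m Q.length
      rw [if_neg (Nat.not_lt.2 h), ih (j - Q.length) (by omega)]
      congr 1
      conv_rhs => rw [show j = (j - Q.length) + Q.length by omega]
      rw [Nat.add_mod_right]

lemma getElem?_substr_one (T : List α) (n j : ℕ) (hj : j < n) :
    (substr T 1 n)[j]? = T[j]? := by
  simp only [substr, Nat.sub_self, List.drop_zero]
  rw [List.getElem?_take, if_pos (by omega)]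

lemma length_substr_one (T : List α) (n : ℕ) (hn : 1 ≤ n) :
    (substr T 1 n).length = min n T.length := by
  simp [substr]
  omega

lemma getElem?_substr_shift (T : List α) (i n j : ℕ) (hj : j < n) (hn : 1 ≤ n) :
    (substr T (i+1) (i+n))[j]? = T[i+j]? := by
  simp only [substr, Nat.add_sub_cancel, show i + n - (i+1) + 1 = n by omega]
  rw [List.getElem?_take, if_pos hj, List.getElem?_drop]

lemma length_substr_shift (T : List α) (i n : ℕ) (hn : 1 ≤ n) :
    (substr T (i+1) (i+n)).length = min n (T.length - i) := by
  simp only [substr, Nat.add_sub_cancel, show i + n - (i+1) + 1 = n by omega,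
    List.length_take, List.length_drop]

lemma length_infSeg_one (Q : List α) (b : ℕ) (hq : 1 ≤ Q.length) (hb : 1 ≤ b) :
    (infSeg Q 1 b).length = b := by
  rw [infSeg, length_substr_one _ _ hb, length_listPow]
  have : b ≤ b * Q.length := by calc b = b * 1 := by omega
                                    _ ≤ b * Q.length := Nat.mul_le_mul_left _ hq
  omega

lemma getElem?_infSeg_one (Q : List α) (b j : ℕ) (hj : j < b) (hq : 1 ≤ Q.length) :
    (infSeg Q 1 b)[j]? = Q[j % Q.length]? := by
  rw [infSeg, getElem?_substr_one _ _ _ hj, getElem?_listPow]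
  calc j < b := hj
  _ = b * 1 := by omega
  _ ≤ b * Q.length := Nat.mul_le_mul_left _ hq

lemma exists_mul_mod (r q a : ℕ) (hq : 0 < q) (hd : Nat.gcd r q ∣ a) :
    ∃ t : ℕ, (t * r) % q = a % q := by
  obtain ⟨c, hc⟩ := hd
  have hbez : (Nat.gcd r q : ℤ) = r * Nat.gcdA r q + q * Nat.gcdB r q := Nat.gcd_eq_gcd_ab r q
  set A := Nat.gcdA r q with hA
  set B := Nat.gcdB r q with hB
  have hqz : (q : ℤ) ≠ 0 := by exact_mod_cast hq.ne'
  refine ⟨((c * A) % q).toNat, ?_⟩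
  have ht0 : (0:ℤ) ≤ (c * A) % q := Int.emod_nonneg _ hqz
  have htc : ((((c * A) % q).toNat : ℤ)) = (c * A) % q := Int.toNat_of_nonneg ht0
  have e0 : ((c : ℤ) * A) % q ≡ (c : ℤ) * A [ZMOD q] := Int.emod_emod_of_dvd _ dvd_rfl
  have e1 : (((c : ℤ) * A) % q) * r ≡ (c : ℤ) * A * r [ZMOD q] := e0.mul_right r
  have e2 : (c : ℤ) * A * r ≡ (a : ℤ) [ZMOD q] := by
    symm
    rw [Int.modEq_iff_dvd]
    refine ⟨-(B * c), ?_⟩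
    have : (a : ℤ) = (Nat.gcd r q : ℤ) * c := by push_cast [hc]; ring
    rw [this, hbez]; ring
  have etot : (((((c * A) % q).toNat : ℤ)) * r) ≡ (a : ℤ) [ZMOD q] := by
    rw [htc]; exact e1.trans e2
  have : ((((c * A) % q).toNat * r : ℕ) : ℤ) % q = ((a : ℕ) : ℤ) % q := by
    push_cast; exact etot
  have : (((((c * A) % q).toNat * r) % q : ℕ) : ℤ) = ((a % q : ℕ) : ℤ) := by
    push_cast; exact this
  exact_mod_cast this

lemma primitive_no_rotate (Q : List α) (hQ : PrimitiveStr Q) (r : ℕ) (hr0 : r ≠ 0)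
    (hrq : r < Q.length)
    (hrot : ∀ j < Q.length, Q[j]? = Q[(j + r) % Q.length]?) : False := by
  set q := Q.length with hqdef
  have hq : 0 < q := by omega
  have step : ∀ t : ℕ, ∀ j < q, Q[j]? = Q[(j + t * r) % q]? := by
    intro t
    induction t with
    | zero => intro j hj; simp [Nat.mod_eq_of_lt hj]
    | succ t ih =>
      intro j hj
      rw [ih j hj, hrot ((j + t * r) % q) (Nat.mod_lt _ hq)]
      congr 1
      rw [Nat.mod_add_mod]
      congr 1
      ring
  set g := Nat.gcd r q with hgdef
  have hgq : g ∣ q := Nat.gcd_dvd_right r q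
  have hg0 : 0 < g := Nat.gcd_pos_of_pos_right r hq
  have hgle : g ≤ q := Nat.le_of_dvd hq hgq
  have claim : ∀ j < q, Q[j]? = Q[j % g]? := by
    intro j hj
    have hsub : g ∣ j - j % g := by
      refine ⟨j / g, ?_⟩
      have := Nat.div_add_mod j g
      omega
    obtain ⟨t, ht⟩ := exists_mul_mod r q (j - j % g) hq (hgdef ▸ hsub)
    have hjg : j % g < q := lt_of_lt_of_le (Nat.mod_lt j hg0) hgle
    have h2 : (j % g + t * r) % q = j := by
      rw [Nat.add_mod, ht, ← Nat.add_mod]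
      have hle : j % g ≤ j := Nat.mod_le j g
      rw [show j % g + (j - j % g) = j by omega, Nat.mod_eq_of_lt hj]
    have := step t (j % g) hjg
    rw [h2] at this
    exact this.symm
  -- Q is a power of take g
  have hPlen : (Q.take g).length = g := by simp [List.length_take]; omega
  have hlen : (listPow (Q.take g) (q / g)).length = q := by
    rw [length_listPow, hPlen, Nat.div_mul_cancel hgq]
  have heq : Q = listPow (Q.take g) (q / g) := by
    apply List.ext_getElem?
    intro j
    by_cases hj : j < q
    · rw [getElem?_listPow _ _ _ (by rw [hPlen, Nat.div_mul_cancel hgq]; exact hj), hPlen,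
        List.getElem?_take, if_pos (Nat.mod_lt _ hg0)]
      exact claim j hj
    · rw [List.getElem?_eq_none (by omega), List.getElem?_eq_none (by omega)]
  have hm1 : q / g = 1 := hQ.2 _ _ heq
  have : q = g := by
    have := Nat.div_mul_cancel hgq
    rw [hm1] at this
    omega
  have : q ∣ r := this ▸ Nat.gcd_dvd_left r q
  have := Nat.le_of_dvd (by omega) this
  omega

/-- if `Q` is primitive, `hd(T[1..ℓ], Q^∞[1..ℓ]) ≤ 2k`, `ℓ' = ⌊ℓ/2⌋` and
`⌊ℓ'/|Q|⌋ ≥ 62k`, then for every `i ≥ 1` not a multiple of `|Q|` with `i + ℓ' ≤ ℓ`,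
`hd(T[1..ℓ'], T[i+1..i+ℓ']) ≥ 54k`. -/
theorem nonmultiple_shift_far [DecidableEq α] (T Q : List α) (ℓ k : ℕ)
    (hk : 1 ≤ k) (hT : ℓ ≤ T.length) (hQ : PrimitiveStr Q)
    (h : hamDist (substr T 1 ℓ) (infSeg Q 1 ℓ) ≤ 2 * k)
    (h62 : 62 * k ≤ (ℓ / 2) / Q.length) :
    ∀ i : ℕ, 1 ≤ i → ¬ Q.length ∣ i → i + ℓ / 2 ≤ ℓ →
      54 * k ≤ hamDist (substr T 1 (ℓ / 2)) (substr T (i + 1) (i + ℓ / 2)) := by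
  intro i hi1 hnd hile
  set q := Q.length with hqdef
  set n := ℓ / 2 with hndef
  have hq : 1 ≤ q := List.length_pos_iff.2 hQ.1
  have hm62 : 62 ≤ n / q := le_trans (by omega) h62
  have hnq : q ≤ n := by
    by_contra hcon
    push_neg at hcon
    rw [Nat.div_eq_of_lt hcon] at hm62
    omega
  have hn1 : 1 ≤ n := le_trans hq hnq
  have hnl : n ≤ ℓ := Nat.div_le_self ℓ 2
  have hl1 : 1 ≤ ℓ := le_trans hn1 hnl
  -- the three mismatch indicator functions
  set c : ℕ → ℕ := fun j => if T[j]? = Q[j % q]? then 0 else 1 with hcdef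
  set a : ℕ → ℕ := fun j => if T[j]? = T[i + j]? then 0 else 1 with hadef
  set b : ℕ → ℕ := fun j => if Q[j % q]? = Q[(i + j) % q]? then 0 else 1 with hbdef
  -- h rewritten as a sum
  have hH : ∑ j ∈ Finset.range ℓ, c j ≤ 2 * k := by
    rw [hamDist_eq_sum] at h
    rw [length_substr_one _ _ hl1, length_infSeg_one _ _ hq hl1] at h
    rw [show min (min ℓ T.length) ℓ = ℓ by omega] at h
    refine le_trans (le_of_eq (Finset.sum_congr rfl ?_)) h
    intro j hj
    simp only [Finset.mem_range] at hj
    rw [hcdef]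
    simp only
    rw [getElem?_substr_one _ _ _ hj, getElem?_infSeg_one _ _ _ hj hq]
  -- target hamming distance as a sum
  have hA : hamDist (substr T 1 n) (substr T (i + 1) (i + n)) = ∑ j ∈ Finset.range n, a j := by
    rw [hamDist_eq_sum, length_substr_one _ _ hn1, length_substr_shift _ _ _ hn1]
    rw [show min (min n T.length) (min n (T.length - i)) = n by omega]
    refine Finset.sum_congr rfl ?_
    intro j hj
    simp only [Finset.mem_range] at hj
    rw [hadef]
    simp only
    rw [getElem?_substr_one _ _ _ hj, getElem?_substr_shift _ _ _ _ hj hn1]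
  -- pointwise triangle inequality
  have hpoint : ∀ j, b j ≤ a j + c j + c (i + j) := by
    intro j
    have hb1 : b j ≤ 1 := by simp only [hbdef]; split <;> omega
    by_cases e2 : T[j]? = Q[j % q]?
    · by_cases e3 : T[i + j]? = Q[(i + j) % q]?
      · by_cases e1 : T[j]? = T[i + j]?
        · have hQQ : Q[j % q]? = Q[(i + j) % q]? := by rw [← e2, e1, e3]
          simp [hbdef, hQQ]
        · have : a j = 1 := by simp [hadef, e1]
          omega
      · have : c (i + j) = 1 := by simp [hcdef, e3]
        omega
    · have : c j = 1 := by simp [hcdef, e2]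
      omega
  -- sum of pointwise bounds
  have hsum : ∑ j ∈ Finset.range n, b j ≤
      (∑ j ∈ Finset.range n, a j) + (∑ j ∈ Finset.range n, c j)
        + (∑ j ∈ Finset.range n, c (i + j)) := by
    rw [← Finset.sum_add_distrib, ← Finset.sum_add_distrib]
    exact Finset.sum_le_sum fun j _ => hpoint j
  have hc1 : ∑ j ∈ Finset.range n, c j ≤ 2 * k :=
    le_trans (Finset.sum_le_sum_of_subset (Finset.range_subset_range.2 hnl)) hH
  have hc2 : ∑ j ∈ Finset.range n, c (i + j) ≤ 2 * k := by
    have he : ∑ j ∈ Finset.range n, c (i + j) = ∑ j ∈ Finset.Ico i (i + n), c j := by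
      rw [Finset.sum_Ico_eq_sum_range]
      simp
    rw [he]
    refine le_trans (Finset.sum_le_sum_of_subset ?_) hH
    intro x hx
    simp only [Finset.mem_Ico, Finset.mem_range] at *
    omega
  -- lower bound on the periodic mismatch count
  have hex : ∃ j0, j0 < q ∧ Q[j0 % q]? ≠ Q[(i + j0) % q]? := by
    by_contra hcon
    push_neg at hcon
    refine primitive_no_rotate Q hQ (i % q)
      (fun h0 => hnd (Nat.dvd_of_mod_eq_zero h0)) (Nat.mod_lt _ (by omega)) ?_
    intro j hj
    have := hcon j hj
    rw [Nat.mod_eq_of_lt hj] at this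
    have e : (i + j) % q = (j + i % q) % q := by
      rw [Nat.add_comm j (i % q), Nat.add_mod i j, Nat.mod_eq_of_lt hj]
    rw [this, e]
  obtain ⟨j0, hj0q, hj0ne⟩ := hex
  set m := n / q with hmdef
  have hmn : m * q ≤ n := Nat.div_mul_le_self n q
  have hkey : ∀ t, t < m → j0 + t * q < n := by
    intro t ht
    calc j0 + t * q < q + t * q := by omega
    _ = (t + 1) * q := by ring
    _ ≤ m * q := Nat.mul_le_mul_right q (by omega)
    _ ≤ n := hmn
  have hbone : ∀ t, t < m → b (j0 + t * q) = 1 := by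
    intro t ht
    simp only [hbdef]
    rw [Nat.add_mul_mod_self_right, ← Nat.add_assoc, Nat.add_mul_mod_self_right]
    rw [if_neg]
    intro hcc
    exact hj0ne hcc
  have hB : 62 * k ≤ ∑ j ∈ Finset.range n, b j := by
    have hinj : Function.Injective (fun t : ℕ => j0 + t * q) := by
      intro x y hxy
      simp only at hxy
      have : x * q = y * q := by omega
      exact Nat.eq_of_mul_eq_mul_right (by omega) this
    set F := (Finset.range m).image (fun t : ℕ => j0 + t * q) with hF
    have hcard : F.card = m := by
      rw [hF, Finset.card_image_of_injective _ hinj, Finset.card_range]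
    have hFsub : F ⊆ Finset.range n := by
      intro x hx
      simp only [hF, Finset.mem_image, Finset.mem_range] at hx ⊢
      obtain ⟨t, ht, rfl⟩ := hx
      exact hkey t ht
    have h1 : m = ∑ j ∈ F, b j := by
      have hone : ∀ x ∈ F, b x = 1 := by
        intro x hx
        simp only [hF, Finset.mem_image, Finset.mem_range] at hx
        obtain ⟨t, ht, rfl⟩ := hx
        exact hbone t ht
      rw [Finset.sum_congr rfl hone, Finset.sum_const, smul_eq_mul, mul_one, hcard]
    calc 62 * k ≤ m := h62
    _ = ∑ j ∈ F, b j := h1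
    _ ≤ ∑ j ∈ Finset.range n, b j := Finset.sum_le_sum_of_subset hFsub
  rw [hA]
  omega
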